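/- Let γ_p(ρ) = a t ρ/(b t ρ + c) and γ_c(ρ) = a'(1−t)ρ/(b t ρ + c) with constants a, a', b, c > 0 and t = t(ρ) = min{K/(ρȲ), 1} for constants K, Ȳ > 0. Then as ρ → ∞, t(ρ)ρ → K/Ȳ, γ_p(ρ) converges to a finite limit, while γ_c(ρ) → ∞; consequently log₂(1+γ_p) + log₂(1+γ_c) → ∞, i.e., the RS sum rate is unbounded in ρ. -/

import Mathlib

/-! Once `ρ ≥ K / Y` the power split gives `t ρ * ρ = K / Y` exactly, so `γp` is eventually
constant while `γc` is eventually an affine function of `ρ` with positive slope. -/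

open Filter Topology

/-- Holds for all `K Y` because of the junk values: if `K / Y ≤ 0` the minimum is the first
argument for every `ρ > 0`, and for `Y = 0` both sides vanish. -/
theorem eventually_min_div_mul_one_mul_eq (K Y : ℝ) :
    ∀ᶠ ρ in atTop, min (K / (ρ * Y)) 1 * ρ = K / Y := by
  filter_upwards [eventually_ge_atTop (max (K / Y) 1)] with ρ hρ
  have hρ0 : 0 < ρ := zero_lt_one.trans_le ((le_max_right _ _).trans hρ)
  have hsplit : K / (ρ * Y) = K / Y / ρ := by rw [mul_comm, div_div]
  have hle : K / Y / ρ ≤ 1 := div_le_one_of_le₀ ((le_max_left _ _).trans hρ) hρ0.le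
  rw [hsplit, min_eq_left hle, div_mul_cancel₀ _ hρ0.ne']

theorem tendsto_logb_one_add_atTop {α : Type*} {l : Filter α} {f : α → ℝ} {β : ℝ} (hβ : 1 < β)
    (hf : Tendsto f l atTop) : Tendsto (fun x => Real.logb β (1 + f x)) l atTop :=
  (Real.tendsto_logb_atTop hβ).comp (tendsto_atTop_add_const_left l 1 hf)

theorem tendsto_mul_sub_div_atTop {m s d : ℝ} (hm : 0 < m) (hd : 0 < d) :
    Tendsto (fun ρ => m * (ρ - s) / d) atTop atTop :=
  ((tendsto_atTop_add_const_right atTop (-s) tendsto_id).const_mul_atTop hm).atTop_div_const hd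

theorem stmt_6_general (a a' b c K Y : ℝ) (ha' : 0 < a') (hb : 0 < b)
    (hc : 0 < c) (hK : 0 < K) (hY : 0 < Y)
    (t : ℝ → ℝ) (ht : ∀ ρ, t ρ = min (K / (ρ * Y)) 1)
    (γp γc : ℝ → ℝ)
    (hγp : ∀ ρ, γp ρ = a * t ρ * ρ / (b * t ρ * ρ + c))
    (hγc : ∀ ρ, γc ρ = a' * (1 - t ρ) * ρ / (b * t ρ * ρ + c)) :
    Tendsto (fun ρ => t ρ * ρ) atTop (𝓝 (K / Y)) ∧
    (∃ L : ℝ, Tendsto γp atTop (𝓝 L)) ∧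
    Tendsto γc atTop atTop ∧
    Tendsto (fun ρ => Real.logb 2 (1 + γp ρ) + Real.logb 2 (1 + γc ρ))
      atTop atTop := by
  set s := K / Y
  have hts : ∀ᶠ ρ in atTop, t ρ * ρ = s := by
    simpa only [ht] using eventually_min_div_mul_one_mul_eq K Y
  have hγp_eq : ∀ᶠ ρ in atTop, γp ρ = a * s / (b * s + c) := by
    filter_upwards [hts] with ρ h
    rw [hγp, mul_assoc, mul_assoc, h]
  have hγc_eq : ∀ᶠ ρ in atTop, a' * (ρ - s) / (b * s + c) = γc ρ := by
    filter_upwards [hts] with ρ h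
    rw [hγc, show a' * (1 - t ρ) * ρ = a' * (ρ - t ρ * ρ) by ring, mul_assoc b, h]
  have hγp_lim : Tendsto γp atTop (𝓝 (a * s / (b * s + c))) :=
    tendsto_const_nhds.congr' (hγp_eq.mono fun _ h => h.symm)
  have hγc_lim : Tendsto γc atTop atTop :=
    (tendsto_mul_sub_div_atTop ha' (by positivity)).congr' hγc_eq
  refine ⟨tendsto_const_nhds.congr' (hts.mono fun _ h => h.symm), ⟨_, hγp_lim⟩, hγc_lim, ?_⟩
  have hlogp : Tendsto (fun ρ => Real.logb 2 (1 + γp ρ)) atTop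
      (𝓝 (Real.logb 2 (1 + a * s / (b * s + c)))) :=
    tendsto_const_nhds.congr' (hγp_eq.mono fun _ h => by simp only [h])
  exact hlogp.add_atTop (tendsto_logb_one_add_atTop one_lt_two hγc_lim)

theorem stmt_6 (a a' b c K Y : ℝ) (ha : 0 < a) (ha' : 0 < a') (hb : 0 < b)
    (hc : 0 < c) (hK : 0 < K) (hY : 0 < Y)
    (t : ℝ → ℝ) (ht : ∀ ρ, t ρ = min (K / (ρ * Y)) 1)
    (γp γc : ℝ → ℝ)
    (hγp : ∀ ρ, γp ρ = a * t ρ * ρ / (b * t ρ * ρ + c))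
    (hγc : ∀ ρ, γc ρ = a' * (1 - t ρ) * ρ / (b * t ρ * ρ + c)) :
    Tendsto (fun ρ => t ρ * ρ) atTop (𝓝 (K / Y)) ∧
    (∃ L : ℝ, Tendsto γp atTop (𝓝 L)) ∧
    Tendsto γc atTop atTop ∧
    Tendsto (fun ρ => Real.logb 2 (1 + γp ρ) + Real.logb 2 (1 + γc ρ))
      atTop atTop :=
  stmt_6_general a a' b c K Y ha' hb hc hK hY t ht γp γc hγp hγc
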